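/- arXiv:1803.06631 — 2 statements merged into one kernel-verified Lean document; each statement's English description precedes it below -/
import Mathlib

section
/- For every g > 0, Z(g) = ∫_{-∞}^{∞} e^{-x²/2 - g x⁴} dx = √(1/(8g)) · e^{1/(32g)} · K_{1/4}(1/(32g)), where K_{1/4} is the modified Bessel function of the second kind of order 1/4. -/
/-!
Since the integrand is even, `Z(g)` is twice the integral over `(0, ∞)`. There the substitution
`x = sinh (t / 4) / √(2g)` turns the quartic potential into `(cosh t - 1) / (32 g)`, because
`cosh (4u) = 1 + 8 sinh² u (1 + sinh² u)`, and the Jacobian `cosh (t / 4) / (4 √(2g))` supplies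
the factor `cosh (t / 4)` of the integral representation of `K_{1/4}`.
-/

open MeasureTheory Real Set

/-- The modified Bessel function of the second kind, via its integral representation
`K_ν(x) = ∫_0^∞ e^{-x cosh t} cosh(ν t) dt`. -/
noncomputable def besselK (ν x : ℝ) : ℝ :=
  ∫ t in Set.Ioi (0 : ℝ), Real.exp (-x * Real.cosh t) * Real.cosh (ν * t)

theorem integral_eq_two_mul_integral_Ioi_of_even {f : ℝ → ℝ} (hf : Function.Even f) :
    ∫ x, f x = 2 * ∫ x in Ioi 0, f x := by
  rw [← integral_comp_abs]
  congr 1 with x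
  rcases abs_choice x with h | h <;> rw [h]
  exact (hf x).symm

theorem Real.cosh_four_mul (u : ℝ) : cosh (4 * u) = 1 + 8 * sinh u ^ 2 * (1 + sinh u ^ 2) := by
  have h4 : cosh (4 * u) = 1 + 2 * sinh (2 * u) ^ 2 := by
    rw [show 4 * u = 2 * (2 * u) by ring, cosh_two_mul, cosh_sq']
    ring
  rw [h4, sinh_two_mul, mul_pow, mul_pow, cosh_sq']
  ring

theorem image_sinh_mul_div_Ioi_zero {k c : ℝ} (hk : 0 < k) (hc : 0 < c) :
    (fun t => sinh (k * t) / c) '' Ioi 0 = Ioi 0 := by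
  ext y
  constructor
  · rintro ⟨t, ht, rfl⟩
    exact div_pos (sinh_pos_iff.2 (mul_pos hk ht)) hc
  · intro hy
    refine ⟨arsinh (y * c) / k, div_pos (arsinh_pos_iff.2 (mul_pos hy hc)) hk, ?_⟩
    simp only [mul_div_cancel₀ _ hk.ne', sinh_arsinh, mul_div_cancel_right₀ _ hc.ne']

theorem integral_Ioi_zero_eq_integral_comp_sinh_mul_div {E : Type*} [NormedAddCommGroup E]
    [NormedSpace ℝ E] (f : ℝ → E) {k c : ℝ} (hk : 0 < k) (hc : 0 < c) :
    ∫ x in Ioi 0, f x = ∫ t in Ioi 0, (k * cosh (k * t) / c) • f (sinh (k * t) / c) := by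
  have hderiv : ∀ t ∈ Ioi (0 : ℝ),
      HasDerivWithinAt (fun t => sinh (k * t) / c) (k * cosh (k * t) / c) (Ioi 0) t := by
    intro t _
    simpa [mul_comm] using (((hasDerivAt_id t).const_mul k).sinh.div_const c).hasDerivWithinAt
  have hmono : StrictMono fun t => sinh (k * t) / c := fun s t hst =>
    div_lt_div_of_pos_right (sinh_lt_sinh.2 (mul_lt_mul_of_pos_left hst hk)) hc
  have h := integral_image_eq_integral_abs_deriv_smul measurableSet_Ioi hderiv
    hmono.injective.injOn f
  rw [image_sinh_mul_div_Ioi_zero hk hc] at h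
  rw [h]
  congr 1 with t
  rw [abs_of_pos (by positivity : 0 < k * cosh (k * t) / c)]

theorem quartic_potential_sinh_div_sqrt {g : ℝ} (hg : 0 < g) (u : ℝ) :
    (sinh u / √(2 * g)) ^ 2 / 2 + g * (sinh u / √(2 * g)) ^ 4 = (cosh (4 * u) - 1) / (32 * g) := by
  have hsq : (sinh u / √(2 * g)) ^ 2 = sinh u ^ 2 / (2 * g) := by
    rw [div_pow, sq_sqrt (by positivity)]
  rw [show (sinh u / √(2 * g)) ^ 4 = ((sinh u / √(2 * g)) ^ 2) ^ 2 by ring, hsq, cosh_four_mul]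
  field_simp
  ring

/-- Closed form of the anharmonic partition function:
`Z(g) = √(1/(8g)) e^{1/(32g)} K_{1/4}(1/(32g))`. -/
theorem partition_function_closed_form (g : ℝ) (hg : 0 < g) :
    (∫ x : ℝ, Real.exp (-(x ^ 2 / 2 + g * x ^ 4))) =
      Real.sqrt (1 / (8 * g)) * Real.exp (1 / (32 * g)) * besselK (1 / 4) (1 / (32 * g)) := by
  set a := 1 / (32 * g)
  have hc : 0 < √(2 * g) := by positivity
  have heven : Function.Even fun x : ℝ => exp (-(x ^ 2 / 2 + g * x ^ 4)) := fun x => by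
    simp only [even_two, Even.neg_pow, Even.neg_pow (by decide : Even 4)]
  have hintegrand : ∀ t : ℝ,
      (1 / 4 * cosh (1 / 4 * t) / √(2 * g)) •
          exp (-((sinh (1 / 4 * t) / √(2 * g)) ^ 2 / 2 + g * (sinh (1 / 4 * t) / √(2 * g)) ^ 4))
        = exp a / (4 * √(2 * g)) * (exp (-a * cosh t) * cosh (1 / 4 * t)) := fun t => by
    rw [quartic_potential_sinh_div_sqrt hg, ← mul_assoc, show (4 : ℝ) * (1 / 4) = 1 by norm_num,
      one_mul, smul_eq_mul, show -((cosh t - 1) / (32 * g)) = -a * cosh t + a by ring, exp_add]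
    ring
  have hsqrt : √(1 / (8 * g)) = 1 / (2 * √(2 * g)) := by
    rw [← sqrt_sq (by positivity : 0 ≤ 1 / (2 * √(2 * g))), div_pow, mul_pow,
      sq_sqrt (by positivity)]
    ring_nf
  rw [integral_eq_two_mul_integral_Ioi_of_even heven,
    integral_Ioi_zero_eq_integral_comp_sinh_mul_div _ (by norm_num : (0 : ℝ) < 1 / 4) hc]
  simp only [hintegrand, integral_const_mul, besselK, hsqrt]
  ring
end

section
/- Let K, N' > 0 and set Q₁ = (K v₀ / N') · exp(((r−1)/r)(1 − K v₀/N')) where r > 1 and v₀ > 0 satisfies K/N' + r v₀^{r-1} = 1/v₀. Then v₀ < N'/K and Q₁ < 1. -/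
/-- If `v₀ > 0` satisfies the optimal-tangency equation `K/N' + r v₀^{r-1} = 1/v₀` with
`r > 1`, then `v₀ < N'/K` and the quotient
`Q₁ = (K v₀/N') exp(((r−1)/r)(1 − K v₀/N'))` is less than `1`. -/
theorem sce_D1_quotient_lt_one (K N' r v₀ : ℝ) (hK : 0 < K) (hN : 0 < N') (hr : 1 < r)
    (hv₀ : 0 < v₀) (hopt : K / N' + r * v₀ ^ (r - 1) = 1 / v₀) :
    v₀ < N' / K ∧
      K * v₀ / N' * Real.exp ((r - 1) / r * (1 - K * v₀ / N')) < 1 := by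
  have hpow : 0 < r * v₀ ^ (r - 1) :=
    mul_pos (by linarith) (Real.rpow_pos_of_pos hv₀ _)
  have hlt : K / N' < 1 / v₀ := by linarith
  have hv : v₀ < N' / K := by
    rw [div_lt_div_iff₀ hN hv₀] at hlt
    rw [lt_div_iff₀ hK]
    linarith
  refine ⟨hv, ?_⟩
  set t := K * v₀ / N' with ht
  have ht0 : 0 < t := by positivity
  have ht1 : t < 1 := by
    rw [ht, div_lt_one hN]
    rw [lt_div_iff₀ hK] at hv
    linarith
  have hc : (r - 1) / r * (1 - t) ≤ 1 - t := by
    have : (r - 1) / r < 1 := by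
      rw [div_lt_one (by linarith)]; linarith
    nlinarith
  have h1 : t < Real.exp (t - 1) := by
    have := Real.add_one_lt_exp (x := t - 1) (by linarith)
    linarith
  have h2 : Real.exp (1 - t) < 1 / t := by
    rw [lt_div_iff₀ ht0]
    calc Real.exp (1 - t) * t < Real.exp (1 - t) * Real.exp (t - 1) :=
          mul_lt_mul_of_pos_left h1 (Real.exp_pos _)
      _ = 1 := by rw [← Real.exp_add]; simp
  calc t * Real.exp ((r - 1) / r * (1 - t)) ≤ t * Real.exp (1 - t) :=
        mul_le_mul_of_nonneg_left (Real.exp_le_exp.mpr hc) ht0.le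
    _ < t * (1 / t) := mul_lt_mul_of_pos_left h2 ht0
    _ = 1 := by field_simp
end
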